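/- Fix α ≥ 0 and let μ be the alternating bilinear map on ℝ⁴ determined (together with antisymmetry) by the nonzero brackets on the standard basis e1,…,e4: [e1,e3] = α·e3 − e4 and [e1,e4] = e3 + α·e4, all other brackets of basis vectors zero. Then μ satisfies the Jacobi identity (it defines a Lie algebra isomorphic to the direct sum s_{3,3} ⊕ ℝ, which is not completely solvable), and μ is in the null cone of the O(B)-action, where B is the bilinear form on ℝ⁴ with B(e1,e2) = B(e2,e1) = B(e3,e4) = B(e4,e3) = 1 and all other pairings of basis vectors zero (a form of neutral signature (2,2)). -/
import Mathlib


/-- The isometry group `O(B)` of a bilinear form `B`. -/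
def IsometryGrp {V : Type*} [AddCommGroup V] [Module ℝ V]
    (B : LinearMap.BilinForm ℝ V) : Set (V ≃ₗ[ℝ] V) :=
  {A | ∀ x y, B (A x) (A y) = B x y}

/-- `μ` is in the null cone of the `O(B)`-action: `0` lies in the closure of the orbit
`O(B)·μ`, `(A·μ)(x,y) = A⁻¹(μ(Ax,Ay))`, in the topology of pointwise convergence. -/
def InNullCone {V : Type*} [AddCommGroup V] [Module ℝ V] [TopologicalSpace V]
    (B : LinearMap.BilinForm ℝ V) (μ : V → V → V) : Prop :=
  (0 : V → V → V) ∈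
    closure {f : V → V → V | ∃ A ∈ IsometryGrp B, f = fun x y => A.symm (μ (A x) (A y))}

/-- The bracket on `ℝ⁴` (standard basis `e1 = e 0, …, e4 = e 3`) given by the alternating
bilinear extension of `[e1,e3] = α•e3 − e4` and `[e1,e4] = e3 + α•e4`, all other brackets
of basis vectors zero.  It defines a Lie algebra isomorphic to `s_{3,3} ⊕ ℝ`. -/
def s33SumRBracket (α : ℝ) : (Fin 4 → ℝ) → (Fin 4 → ℝ) → (Fin 4 → ℝ) :=
  fun x y =>
    ![0,
      0,
      α * (x 0 * y 2 - x 2 * y 0) + (x 0 * y 3 - x 3 * y 0),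
      -(x 0 * y 2 - x 2 * y 0) + α * (x 0 * y 3 - x 3 * y 0)]

/-- The neutral signature `(2,2)` bilinear form on `ℝ⁴` with
`B(e1,e2) = B(e2,e1) = B(e3,e4) = B(e4,e3) = 1`, all other pairings zero. -/
noncomputable def neutralForm4 : LinearMap.BilinForm ℝ (Fin 4 → ℝ) :=
  Matrix.toLinearMap₂' ℝ
    (!![0,1,0,0; 1,0,0,0; 0,0,0,1; 0,0,1,0] : Matrix (Fin 4) (Fin 4) ℝ)


noncomputable def scalEquiv (t : ℝ) (ht : t ≠ 0) : (Fin 4 → ℝ) ≃ₗ[ℝ] (Fin 4 → ℝ) where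
  toFun x := ![t * x 0, t⁻¹ * x 1, x 2, x 3]
  invFun x := ![t⁻¹ * x 0, t * x 1, x 2, x 3]
  map_add' x y := by funext i; fin_cases i <;> simp <;> ring
  map_smul' c x := by funext i; fin_cases i <;> simp <;> ring
  left_inv x := by
    funext i; fin_cases i <;> simp <;> field_simp
  right_inv x := by
    funext i; fin_cases i <;> simp <;> field_simp

lemma scalEquiv_mem (t : ℝ) (ht : t ≠ 0) : scalEquiv t ht ∈ IsometryGrp neutralForm4 := by
  intro x y
  simp [neutralForm4, scalEquiv, Matrix.toLinearMap₂'_apply, Fin.sum_univ_four,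
    Matrix.vecHead, Matrix.vecTail]
  field_simp

lemma scalEquiv_act (α t : ℝ) (ht : t ≠ 0) :
    (fun x y => (scalEquiv t ht).symm (s33SumRBracket α (scalEquiv t ht x) (scalEquiv t ht y)))
      = fun x y => t • s33SumRBracket α x y := by
  funext x y
  funext i
  fin_cases i <;>
    simp [scalEquiv, s33SumRBracket, LinearEquiv.coe_symm_mk] <;> ring

/-- For every `α ≥ 0`, the bracket of `s_{3,3} ⊕ ℝ` satisfies the Jacobi identity and is in
the null cone of the `O(B)`-action for the neutral form `B` of signature `(2,2)`. -/
theorem s33_sum_R_jacobi_and_in_null_cone (α : ℝ) (hα : 0 ≤ α) :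
    (∀ x y z : Fin 4 → ℝ,
      s33SumRBracket α x (s33SumRBracket α y z) + s33SumRBracket α y (s33SumRBracket α z x) +
        s33SumRBracket α z (s33SumRBracket α x y) = 0) ∧
    InNullCone neutralForm4 (s33SumRBracket α) := by
  constructor
  · intro x y z
    funext i
    fin_cases i <;> simp [s33SumRBracket] <;> ring
  · have hne : ∀ n : ℕ, (1 / ((n : ℝ) + 1)) ≠ 0 := by
      intro n; positivity
    have htend : Filter.Tendsto (fun n : ℕ =>
        (fun x y => (1 / ((n : ℝ) + 1)) • s33SumRBracket α x y))
        Filter.atTop (nhds (0 : (Fin 4 → ℝ) → (Fin 4 → ℝ) → (Fin 4 → ℝ))) := by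
      rw [tendsto_pi_nhds]
      intro x
      rw [tendsto_pi_nhds]
      intro y
      have h0 : (0 : (Fin 4 → ℝ) → (Fin 4 → ℝ) → (Fin 4 → ℝ)) x y
          = (0:ℝ) • s33SumRBracket α x y := by simp
      rw [h0]
      exact tendsto_one_div_add_atTop_nhds_zero_nat.smul_const _
    refine mem_closure_of_tendsto htend ?_
    filter_upwards with n
    exact ⟨scalEquiv _ (hne n), scalEquiv_mem _ (hne n), (scalEquiv_act α _ (hne n)).symm⟩
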